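/- For real numbers a, b, c ≥ 0, let P' := {(u₁,u₂) ∈ ℝ² : u₁ ≥ 0, 0 ≤ u₂ ≤ b, u₁ + u₂ ≤ a+b} (a trapezoid) and let I := conv{(0,0),(0,1)}, so that P' + c·I = {(u₁,u₂) : u₁ ≥ 0, 0 ≤ u₂ ≤ b+c, u₁+u₂ ≤ a+b+c}. Then the convex hull of (P'×{c}) ∪ ((P'+c·I)×{0}) in ℝ³ (third coordinate u₃) equals Δ₃(a,b,c) := {(u₁,u₂,u₃) ∈ ℝ³ : u₁, u₂, u₃ ≥ 0, u₁ ≤ a+b, u₃ ≤ c, u₂+u₃ ≤ b+c, u₁+u₂+u₃ ≤ a+b+c}. -/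

import Mathlib

/-!
For `w ∈ P'`, `v ∈ I` and `λ = s / c`, the combination `λ (w, c) + (1 - λ) (w + c v, 0)` equals
`(w + (c - s) v, s)`, so the slice of the convex hull at height `s ∈ [0, c]` contains
`P' + (c - s)·I`. As `P' + c'·I = {0 ≤ u₁ ≤ a + b, 0 ≤ u₂ ≤ b + c', u₁ + u₂ ≤ a + b + c'}` for all
`c' ≥ 0`, these slices fill `Δ₃(a,b,c)`, which is convex and contains the generators.
-/

open Set Pointwise

def trapezoid (a b : ℝ) : Set (ℝ × ℝ) :=
  {u | 0 ≤ u.1 ∧ 0 ≤ u.2 ∧ u.2 ≤ b ∧ u.1 + u.2 ≤ a + b}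

def Delta3 (a b c : ℝ) : Set ((ℝ × ℝ) × ℝ) :=
  {p | 0 ≤ p.1.1 ∧ 0 ≤ p.1.2 ∧ 0 ≤ p.2 ∧ p.1.1 ≤ a + b ∧ p.2 ≤ c ∧
    p.1.2 + p.2 ≤ b + c ∧ p.1.1 + p.1.2 + p.2 ≤ a + b + c}

theorem convex_Delta3 (a b c : ℝ) : Convex ℝ (Delta3 a b c) := by
  rintro ⟨⟨x₁, x₂⟩, x₃⟩ ⟨hx₁, hx₂, hx₃, hx₄, hx₅, hx₆, hx₇⟩ ⟨⟨y₁, y₂⟩, y₃⟩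
    ⟨hy₁, hy₂, hy₃, hy₄, hy₅, hy₆, hy₇⟩ α β hα hβ hαβ
  simp only [Delta3, Prod.smul_mk, Prod.mk_add_mk, smul_eq_mul, mem_ofPred_eq] at *
  refine ⟨?_, ?_, ?_, ?_, ?_, ?_, ?_⟩ <;> nlinarith

theorem smul_convexHull_vertical_pair {c : ℝ} (hc : 0 ≤ c) :
    c • convexHull ℝ ({((0 : ℝ), (0 : ℝ)), (0, 1)} : Set (ℝ × ℝ)) = {0} ×ˢ Icc 0 c := by
  rw [← convexHull_smul, smul_set_insert, smul_set_singleton]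
  simp only [Prod.smul_mk, smul_eq_mul, mul_zero, mul_one]
  rw [convexHull_pair, ← Prod.image_mk_segment_right, segment_eq_Icc hc, singleton_prod]

theorem mem_trapezoid_add_smul_convexHull_vertical_pair_iff {a b c : ℝ} (hb : 0 ≤ b)
    (hc : 0 ≤ c) {u : ℝ × ℝ} :
    u ∈ trapezoid a b + c • convexHull ℝ ({((0 : ℝ), (0 : ℝ)), (0, 1)} : Set (ℝ × ℝ)) ↔
      0 ≤ u.1 ∧ u.1 ≤ a + b ∧ 0 ≤ u.2 ∧ u.2 ≤ b + c ∧ u.1 + u.2 ≤ a + b + c := by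
  rw [smul_convexHull_vertical_pair hc]
  constructor
  · rintro ⟨w, ⟨hw₁, hw₂, hw₃, hw₄⟩, v, ⟨hv₁, hv₂, hv₃⟩, rfl⟩
    rw [mem_singleton_iff] at hv₁
    simp only [Prod.fst_add, Prod.snd_add, hv₁, add_zero]
    refine ⟨hw₁, ?_, ?_, ?_, ?_⟩ <;> linarith
  · rintro ⟨hu₁, hu₁', hu₂, hu₂', hu₁₂⟩
    -- `w₂` is the lowest point of `P'` below `u` from which `u` is within vertical distance `c`
    set w₂ := max 0 (u.2 - c)
    have hw₂ : 0 ≤ w₂ := le_max_left _ _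
    have hw₂b : w₂ ≤ b := max_le hb (by linarith)
    have hw₂u : w₂ ≤ u.2 := max_le hu₂ (by linarith)
    have hw₂a : w₂ ≤ a + b - u.1 := max_le (by linarith) (by linarith)
    have hvc : u.2 - w₂ ≤ c := by linarith [le_max_right 0 (u.2 - c)]
    refine ⟨(u.1, w₂), ⟨hu₁, hw₂, hw₂b, by linarith⟩, (0, u.2 - w₂),
      ⟨rfl, by linarith, hvc⟩, by simp⟩

theorem add_smul_mk_mem_convexHull_union {E : Type*} [AddCommGroup E] [Module ℝ E]
    {T I : Set E} {w v : E} (hw : w ∈ T) (hv : v ∈ I) {c s : ℝ} (hs : 0 ≤ s) (hsc : s ≤ c) :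
    (w + (c - s) • v, s) ∈ convexHull ℝ (T ×ˢ {c} ∪ (T + c • I) ×ˢ {0}) := by
  set θ := s / c
  have hθ : θ * c = s := div_mul_cancel_of_imp fun hc ↦ le_antisymm (hc ▸ hsc) hs
  have hcombo : (w + (c - s) • v, s) = θ • (w, c) + (1 - θ) • (w + c • v, (0 : ℝ)) := by
    rw [← hθ]
    ext
    · simp only [Prod.fst_add, Prod.smul_fst]
      module
    · simp
  have hupper : (w, c) ∈ T ×ˢ {c} ∪ (T + c • I) ×ˢ {0} := mem_union_left _ (mk_mem_prod hw rfl)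
  have hlower : (w + c • v, (0 : ℝ)) ∈ T ×ˢ {c} ∪ (T + c • I) ×ˢ {0} :=
    mem_union_right _ (mk_mem_prod (add_mem_add hw (smul_mem_smul_set hv)) rfl)
  rw [hcombo]
  exact convex_convexHull ℝ _ (subset_convexHull ℝ _ hupper) (subset_convexHull ℝ _ hlower)
    (div_nonneg hs (hs.trans hsc)) (sub_nonneg.2 (div_le_one_of_le₀ hsc (hs.trans hsc)))
    (add_sub_cancel _ _)

theorem pushPull_trapezoid_eq_Delta3 (a b c : ℝ) (hb : 0 ≤ b) (hc : 0 ≤ c) :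
    convexHull ℝ
        (({u : ℝ × ℝ | 0 ≤ u.1 ∧ 0 ≤ u.2 ∧ u.2 ≤ b ∧ u.1 + u.2 ≤ a + b} ×ˢ
            ({c} : Set ℝ)) ∪
          (({u : ℝ × ℝ | 0 ≤ u.1 ∧ 0 ≤ u.2 ∧ u.2 ≤ b ∧ u.1 + u.2 ≤ a + b} +
              c • convexHull ℝ ({((0 : ℝ), (0 : ℝ)), (0, 1)} : Set (ℝ × ℝ))) ×ˢ
            ({0} : Set ℝ))) =
      {p : (ℝ × ℝ) × ℝ | 0 ≤ p.1.1 ∧ 0 ≤ p.1.2 ∧ 0 ≤ p.2 ∧ p.1.1 ≤ a + b ∧ p.2 ≤ c ∧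
        p.1.2 + p.2 ≤ b + c ∧ p.1.1 + p.1.2 + p.2 ≤ a + b + c} := by
  change convexHull ℝ (trapezoid a b ×ˢ {c} ∪ (trapezoid a b + c • _) ×ˢ {0}) = Delta3 a b c
  refine Subset.antisymm (convexHull_min ?_ (convex_Delta3 a b c)) ?_
  · rintro ⟨u, s⟩ (⟨⟨hu₁, hu₂, hu₃, hu₄⟩, rfl : s = c⟩ | ⟨hu, rfl : s = 0⟩)
    · refine ⟨hu₁, hu₂, hc, ?_, le_rfl, ?_, ?_⟩ <;> linarith
    · obtain ⟨hu₁, hu₁', hu₂, hu₂', hu₁₂⟩ :=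
        (mem_trapezoid_add_smul_convexHull_vertical_pair_iff hb hc).1 hu
      refine ⟨hu₁, hu₂, le_rfl, hu₁', hc, ?_, ?_⟩ <;> linarith
  · rintro ⟨u, s⟩ ⟨hu₁, hu₂, hs, hu₁', hsc, hu₂s, hu₁₂s⟩
    -- the slice at height `s` is `P' + (c - s)·I`
    dsimp only at hs hsc
    obtain ⟨w, hw, _, ⟨v, hv, rfl⟩, rfl⟩ :=
      (mem_trapezoid_add_smul_convexHull_vertical_pair_iff hb (sub_nonneg.2 hsc)).2
        ⟨hu₁, hu₁', hu₂, by linarith, by linarith⟩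
    exact add_smul_mk_mem_convexHull_union hw hv hs hsc
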